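/- Let w ∈ (0,1), α > 0, and let r₁,…,r₅, s₁,…,s₈, t₁,…,t₁₀ be the polynomials of w listed below; set β := r₁ + r₂α² + r₃α. For ρ ∈ ℝ define the stencil C₀,₀ := 1, C₋₁,₁ = C₋₁,−1 := [(r₄α²+r₅α)ρ + t₁α² + t₂α]/β, C₁,₁ = C₁,−1 := ρ, C₀,₁ = C₀,−1 := [(s₁+s₂α²+s₃α)ρ + t₃ + t₄α² + t₅α]/β, C₋₁,₀ := [(s₄α²+s₅α)ρ + t₆α² + t₇α]/β, C₁,₀ := [(s₆+s₇α²+s₈α)ρ + t₈ + t₉α² + t₁₀α]/β. Then: (i) β > 0, r₄α²+r₅α > 0, and the quantities s₁+s₂α²+s₃α, s₄α²+s₅α, s₆+s₇α²+s₈α are all negative; (ii) for every ρ ∈ ℝ, ∑_{k=−1}^{1} ∑_{ℓ=−1}^{1} C_{k,ℓ} = 0 (summation condition); (iii) the sign condition (C₀,₀ > 0 and C_{k,ℓ} ≤ 0 for (k,ℓ) ≠ (0,0)) holds if and only if max{ −(t₃+t₄α²+t₅α)/(s₁+s₂α²+s₃α), −(t₆α²+t₇α)/(s₄α²+s₅α),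 −(t₈+t₉α²+t₁₀α)/(s₆+s₇α²+s₈α) } ≤ ρ ≤ min{ 0, −(t₁α²+t₂α)/(r₄α²+r₅α) }; (iv) this closed interval is nonempty, i.e., the left-hand maximum is strictly less than the right-hand minimum. -/
import Mathlib


open Finset

noncomputable def r1 (w : ℝ) : ℝ := 12*(w^3-w^2-w+1)
noncomputable def r2 (w : ℝ) : ℝ := 4*(w^3+3*w^2+2*w)
noncomputable def r3 (w : ℝ) : ℝ := 4*(-4*w^3+w+3)
noncomputable def r4 (w : ℝ) : ℝ := 4*(2*w^3+w+3)
noncomputable def r5 (w : ℝ) : ℝ := 4*(-2*w^3-w+3)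
noncomputable def s1 (w : ℝ) : ℝ := 6*(-w^2+2*w-1)
noncomputable def s2 (w : ℝ) : ℝ := -6*(w^2+2*w+1)
noncomputable def s3 (w : ℝ) : ℝ := 12*(w^2-1)
noncomputable def s4 (w : ℝ) : ℝ := 4*(-4*w^3+w-3)
noncomputable def s5 (w : ℝ) : ℝ := 4*(4*w^3-w-3)
noncomputable def s6 (w : ℝ) : ℝ := 12*(-2*w^3+3*w^2-1)
noncomputable def s7 (w : ℝ) : ℝ := 4*(-2*w^3-3*w^2-w)
noncomputable def s8 (w : ℝ) : ℝ := 4*(8*w^3-6*w^2+w-3)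
noncomputable def t1 (w : ℝ) : ℝ := -4*w^3+6*w^2-2*w
noncomputable def t2 (w : ℝ) : ℝ := 4*w^3-6*w^2+2*w
noncomputable def t3 (w : ℝ) : ℝ := -6*w^3+9*w^2-3
noncomputable def t4 (w : ℝ) : ℝ := -2*w^3-3*w^2-w
noncomputable def t5 (w : ℝ) : ℝ := 8*w^3-6*w^2+w-3
noncomputable def t6 (w : ℝ) : ℝ := 8*w^3-12*w^2-2*w
noncomputable def t7 (w : ℝ) : ℝ := -8*w^3+12*w^2+2*w-6
noncomputable def t8 (w : ℝ) : ℝ := 6*(-w^2+2*w-1)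
noncomputable def t9 (w : ℝ) : ℝ := -6*w^2
noncomputable def t10 (w : ℝ) : ℝ := 12*(w^2-w)

/-- `β = r₁ + r₂ α² + r₃ α`. -/
noncomputable def beta (α w : ℝ) : ℝ := r1 w + r2 w * α^2 + r3 w * α

/-- the third-order 9-point stencil coefficients near a vertical interface, with
free parameter `ρ`. -/
noncomputable def Cρ (α w ρ : ℝ) : ℤ → ℤ → ℝ := fun k l =>
  if k = 0 ∧ l = 0 then 1
  else if k = -1 ∧ l = 0 then ((s4 w * α^2 + s5 w * α) * ρ + t6 w * α^2 + t7 w * α) / beta α w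
  else if k = -1 then ((r4 w * α^2 + r5 w * α) * ρ + t1 w * α^2 + t2 w * α) / beta α w
  else if k = 0 then ((s1 w + s2 w * α^2 + s3 w * α) * ρ + t3 w + t4 w * α^2 + t5 w * α) / beta α w
  else if l = 0 then ((s6 w + s7 w * α^2 + s8 w * α) * ρ + t8 w + t9 w * α^2 + t10 w * α) / beta α w
  else ρ

set_option maxHeartbeats 1000000 in
theorem stmt7 (w α : ℝ) (hw : w ∈ Set.Ioo (0 : ℝ) 1) (hα : 0 < α) :
    (0 < beta α w ∧ 0 < r4 w * α^2 + r5 w * α ∧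
      s1 w + s2 w * α^2 + s3 w * α < 0 ∧ s4 w * α^2 + s5 w * α < 0 ∧
      s6 w + s7 w * α^2 + s8 w * α < 0) ∧
    (∀ ρ : ℝ, (∑ k ∈ Finset.Icc (-1 : ℤ) 1, ∑ l ∈ Finset.Icc (-1 : ℤ) 1, Cρ α w ρ k l) = 0) ∧
    (∀ ρ : ℝ,
      ((0 < Cρ α w ρ 0 0 ∧
        ∀ k ∈ Finset.Icc (-1 : ℤ) 1, ∀ l ∈ Finset.Icc (-1 : ℤ) 1,
          (k, l) ≠ (0, 0) → Cρ α w ρ k l ≤ 0)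
      ↔ (max (max (-(t3 w + t4 w * α^2 + t5 w * α) / (s1 w + s2 w * α^2 + s3 w * α))
              (-(t6 w * α^2 + t7 w * α) / (s4 w * α^2 + s5 w * α)))
            (-(t8 w + t9 w * α^2 + t10 w * α) / (s6 w + s7 w * α^2 + s8 w * α)) ≤ ρ ∧
          ρ ≤ min 0 (-(t1 w * α^2 + t2 w * α) / (r4 w * α^2 + r5 w * α))))) ∧
    (max (max (-(t3 w + t4 w * α^2 + t5 w * α) / (s1 w + s2 w * α^2 + s3 w * α))
          (-(t6 w * α^2 + t7 w * α) / (s4 w * α^2 + s5 w * α)))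
        (-(t8 w + t9 w * α^2 + t10 w * α) / (s6 w + s7 w * α^2 + s8 w * α))
      < min 0 (-(t1 w * α^2 + t2 w * α) / (r4 w * α^2 + r5 w * α))) := by
  obtain ⟨hw0, hw1⟩ := hw
  have h1w : (0:ℝ) < 1 - w := by linarith
  have hw3 : (0:ℝ) < w^3 := pow_pos hw0 3
  have hw2 : (0:ℝ) < w^2 := pow_pos hw0 2
  have hα2 : (0:ℝ) < α^2 := pow_pos hα 2
  -- basic coefficient signs
  have hr1 : 0 < r1 w := by
    have := mul_pos (mul_pos h1w h1w) (show (0:ℝ) < 1 + w by linarith)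
    simp only [r1]; linarith
  have hr2 : 0 < r2 w := by
    simp only [r2]; linarith [hw3, hw2, hw0]
  have hr3 : 0 < r3 w := by
    have := mul_pos h1w (show (0:ℝ) < 4*w^2 + 4*w + 3 by linarith [hw2, hw0])
    simp only [r3]; linarith
  have hr4 : 0 < r4 w := by simp only [r4]; linarith [hw3, hw0]
  have hr5 : 0 < r5 w := by
    have := mul_pos h1w (show (0:ℝ) < 2*w^2 + 2*w + 3 by linarith [hw2, hw0])
    simp only [r5]; linarith
  have hβ : 0 < beta α w := by
    have h2 := mul_pos hr2 hα2
    have h3 := mul_pos hr3 hα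
    simp only [beta]; linarith [hr1, h2, h3]
  have hβ' : beta α w ≠ 0 := ne_of_gt hβ
  have hR : 0 < r4 w * α^2 + r5 w * α := by
    linarith [mul_pos hr4 hα2, mul_pos hr5 hα]
  have hs1 : s1 w < 0 := by
    have := mul_pos h1w h1w; simp only [s1]; linarith
  have hs2 : s2 w < 0 := by simp only [s2]; linarith [hw2, hw0]
  have hs3 : s3 w < 0 := by simp only [s3]; linarith [mul_pos h1w (show (0:ℝ) < 1 + w by linarith)]
  have hS1 : s1 w + s2 w * α^2 + s3 w * α < 0 := by
    linarith [mul_neg_of_neg_of_pos hs2 hα2, mul_neg_of_neg_of_pos hs3 hα]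
  have hs4 : s4 w < 0 := by simp only [s4]; linarith [hw3]
  have hs5 : s5 w < 0 := by
    have := mul_pos h1w (show (0:ℝ) < 4*w^2 + 4*w + 3 by linarith [hw2, hw0])
    simp only [s5]; linarith
  have hS2 : s4 w * α^2 + s5 w * α < 0 := by
    linarith [mul_neg_of_neg_of_pos hs4 hα2, mul_neg_of_neg_of_pos hs5 hα]
  have hs6 : s6 w < 0 := by
    have := mul_pos (mul_pos h1w h1w) (show (0:ℝ) < 2*w + 1 by linarith)
    simp only [s6]; linarith
  have hs7 : s7 w < 0 := by simp only [s7]; linarith [hw3, hw2, hw0]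
  have hs8 : s8 w < 0 := by
    have := mul_pos h1w (show (0:ℝ) < 8*w^2 + 2*w + 3 by linarith [hw2, hw0])
    simp only [s8]; linarith
  have hS3 : s6 w + s7 w * α^2 + s8 w * α < 0 := by
    linarith [mul_neg_of_neg_of_pos hs7 hα2, mul_neg_of_neg_of_pos hs8 hα]
  -- numerator signs
  have ht3 : t3 w < 0 := by
    have := mul_pos (mul_pos h1w h1w) (show (0:ℝ) < 2*w + 1 by linarith)
    simp only [t3]; linarith
  have ht4 : t4 w < 0 := by simp only [t4]; linarith [hw3, hw2, hw0]
  have ht5 : t5 w < 0 := by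
    have := mul_pos h1w (show (0:ℝ) < 8*w^2 + 2*w + 3 by linarith [hw2, hw0])
    simp only [t5]; linarith
  have hN1 : t3 w + t4 w * α^2 + t5 w * α < 0 := by
    linarith [mul_neg_of_neg_of_pos ht4 hα2, mul_neg_of_neg_of_pos ht5 hα]
  have ht6 : t6 w < 0 := by
    have h6a := mul_pos (mul_pos hw0 hw0) h1w
    simp only [t6]; linarith [hw2, hw0]
  have ht7 : t7 w < 0 := by
    have := mul_pos h1w (show (0:ℝ) < 6 + 4*w - 8*w^2 by linarith [mul_pos hw0 h1w])
    simp only [t7]; linarith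
  have hN2 : t6 w * α^2 + t7 w * α < 0 := by
    linarith [mul_neg_of_neg_of_pos ht6 hα2, mul_neg_of_neg_of_pos ht7 hα]
  have ht8 : t8 w < 0 := by
    have := mul_pos h1w h1w; simp only [t8]; linarith
  have ht9 : t9 w < 0 := by simp only [t9]; linarith [hw2]
  have ht10 : t10 w < 0 := by
    have := mul_pos hw0 h1w; simp only [t10]; linarith
  have hN3 : t8 w + t9 w * α^2 + t10 w * α < 0 := by
    linarith [mul_neg_of_neg_of_pos ht9 hα2, mul_neg_of_neg_of_pos ht10 hα]
  -- the three cross polynomial inequalities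
  have hD1 : (t3 w + t4 w * α^2 + t5 w * α) * (r4 w * α^2 + r5 w * α)
      < (t1 w * α^2 + t2 w * α) * (s1 w + s2 w * α^2 + s3 w * α) := by
    have P1 : 0 < (1-w)^3 * (w+1) * (4*w^2+4*w+3) * α :=
      mul_pos (mul_pos (mul_pos (pow_pos h1w 3) (by linarith)) (by linarith [hw2, hw0])) hα
    have P2 : 0 < (1-w)^2 * (28*w^4+44*w^3+37*w^2+30*w+18) * α^2 :=
      mul_pos (mul_pos (pow_pos h1w 2)
        (by linarith [pow_pos hw0 4, pow_pos hw0 3, hw2, hw0])) hα2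
    have P3 : 0 < (1-w) * (20*w^5+32*w^4+31*w^3+25*w^2+15*w+9) * α^3 :=
      mul_pos (mul_pos h1w
        (by linarith [pow_pos hw0 5, pow_pos hw0 4, pow_pos hw0 3, hw2, hw0])) (pow_pos hα 3)
    have P4 : 0 < w * (4*w^5+12*w^4+7*w^3+7*w+6) * α^4 :=
      mul_pos (mul_pos hw0
        (by linarith [pow_pos hw0 5, pow_pos hw0 4, pow_pos hw0 3, hw2, hw0])) (pow_pos hα 4)
    simp only [t1, t2, t3, t4, t5, r4, r5, s1, s2, s3]
    linarith [P1, P2, P3, P4]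
  have hD2 : (t6 w * α^2 + t7 w * α) * (r4 w * α^2 + r5 w * α)
      < (t1 w * α^2 + t2 w * α) * (s4 w * α^2 + s5 w * α) := by
    have P1 : 0 < (1-w)^2 * (w+1) * α^2 :=
      mul_pos (mul_pos (pow_pos h1w 2) (by linarith)) hα2
    have P2 : 0 < (1-w) * (4*w^2+4*w+3) * α^3 :=
      mul_pos (mul_pos h1w (by linarith [hw2, hw0])) (pow_pos hα 3)
    have P3 : 0 < w * (w+1) * (w+2) * α^4 :=
      mul_pos (mul_pos (mul_pos hw0 (by linarith)) (by linarith)) (pow_pos hα 4)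
    simp only [t1, t2, t6, t7, r4, r5, s4, s5]
    linarith [P1, P2, P3]
  have hD3 : (t8 w + t9 w * α^2 + t10 w * α) * (r4 w * α^2 + r5 w * α)
      < (t1 w * α^2 + t2 w * α) * (s6 w + s7 w * α^2 + s8 w * α) := by
    rcases le_or_gt 0 (-72 - 24*w + 160*w^2 + 24*w^3 - 296*w^4 + 432*w^5 - 224*w^6)
      with hc1 | hc1
    · have Q1 : 0 < 8 * ((1-w)^2 * (4*w^4+14*w^3+19*w^2+9*w+27)) * α := by
        have := mul_pos (pow_pos h1w 2)
          (show (0:ℝ) < 4*w^4+14*w^3+19*w^2+9*w+27 by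
            linarith [pow_pos hw0 4, pow_pos hw0 3, hw2, hw0])
        linarith [mul_pos this hα]
      have Q2 : 0 < 24 * ((1-w) * (4*w^5+10*w^4+5*w^3+2*w^2+18*w+3)) * α^3 := by
        have := mul_pos h1w
          (show (0:ℝ) < 4*w^5+10*w^4+5*w^3+2*w^2+18*w+3 by
            linarith [pow_pos hw0 5, pow_pos hw0 4, pow_pos hw0 3, hw2, hw0])
        linarith [mul_pos this (pow_pos hα 3)]
      have Q3 : 0 < 16 * (w^2 * (4*w^4+6*w^3-5*w^2+3*w+10)) * α^4 := by
        have := mul_pos hw2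
          (show (0:ℝ) < 4*w^4+6*w^3-5*w^2+3*w+10 by
            linarith [pow_pos hw0 4, pow_pos hw0 3, hw0,
              mul_pos h1w (show (0:ℝ) < 1 + w by linarith)])
        linarith [mul_pos this (pow_pos hα 4)]
      have Q4 : 0 ≤ (-72 - 24*w + 160*w^2 + 24*w^3 - 296*w^4 + 432*w^5 - 224*w^6)
          * (α - 1)^2 * α :=
        mul_nonneg (mul_nonneg hc1 (sq_nonneg _)) hα.le
      simp only [t1, t2, t8, t9, t10, r4, r5, s6, s7, s8]
      linarith [Q1, Q2, Q3, Q4]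
    · have Q1 : 0 < 24 * ((1-w)^3 * (4*w^3+2*w^2+w+3)) * α := by
        have := mul_pos (pow_pos h1w 3)
          (show (0:ℝ) < 4*w^3+2*w^2+w+3 by linarith [hw3, hw2, hw0])
        linarith [mul_pos this hα]
      have Q2 : 0 < -(-72 - 24*w + 160*w^2 + 24*w^3 - 296*w^4 + 432*w^5 - 224*w^6) * α^2 :=
        mul_pos (by linarith) hα2
      have Q3 : 0 < 8 * (w * (1-w) * (20*w^4+2*w^3+13*w^2+7*w+21)) * α^3 := by
        have := mul_pos (mul_pos hw0 h1w)
          (show (0:ℝ) < 20*w^4+2*w^3+13*w^2+7*w+21 by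
            linarith [pow_pos hw0 4, pow_pos hw0 3, hw2, hw0])
        linarith [mul_pos this (pow_pos hα 3)]
      have Q4 : 0 < 8 * (w^2 * (4*w^4+6*w^3-5*w^2+3*w+10)) * α^4 := by
        have := mul_pos hw2
          (show (0:ℝ) < 4*w^4+6*w^3-5*w^2+3*w+10 by
            linarith [pow_pos hw0 4, pow_pos hw0 3, hw0,
              mul_pos h1w (show (0:ℝ) < 1 + w by linarith)])
        linarith [mul_pos this (pow_pos hα 4)]
      simp only [t1, t2, t8, t9, t10, r4, r5, s6, s7, s8]
      linarith [Q1, Q2, Q3, Q4]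
  -- evaluation lemmas for the stencil
  have hC00 : ∀ ρ : ℝ, Cρ α w ρ 0 0 = 1 := fun ρ => by norm_num [Cρ]
  have hCm1m1 : ∀ ρ : ℝ, Cρ α w ρ (-1) (-1)
      = ((r4 w * α^2 + r5 w * α) * ρ + t1 w * α^2 + t2 w * α) / beta α w :=
    fun ρ => by norm_num [Cρ]
  have hCm11 : ∀ ρ : ℝ, Cρ α w ρ (-1) 1
      = ((r4 w * α^2 + r5 w * α) * ρ + t1 w * α^2 + t2 w * α) / beta α w :=
    fun ρ => by norm_num [Cρ]
  have hCm10 : ∀ ρ : ℝ, Cρ α w ρ (-1) 0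
      = ((s4 w * α^2 + s5 w * α) * ρ + t6 w * α^2 + t7 w * α) / beta α w :=
    fun ρ => by norm_num [Cρ]
  have hC0m1 : ∀ ρ : ℝ, Cρ α w ρ 0 (-1)
      = ((s1 w + s2 w * α^2 + s3 w * α) * ρ + t3 w + t4 w * α^2 + t5 w * α) / beta α w :=
    fun ρ => by norm_num [Cρ]
  have hC01 : ∀ ρ : ℝ, Cρ α w ρ 0 1
      = ((s1 w + s2 w * α^2 + s3 w * α) * ρ + t3 w + t4 w * α^2 + t5 w * α) / beta α w :=
    fun ρ => by norm_num [Cρ]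
  have hC10 : ∀ ρ : ℝ, Cρ α w ρ 1 0
      = ((s6 w + s7 w * α^2 + s8 w * α) * ρ + t8 w + t9 w * α^2 + t10 w * α) / beta α w :=
    fun ρ => by norm_num [Cρ]
  have hC1m1 : ∀ ρ : ℝ, Cρ α w ρ 1 (-1) = ρ := fun ρ => by norm_num [Cρ]
  have hC11 : ∀ ρ : ℝ, Cρ α w ρ 1 1 = ρ := fun ρ => by norm_num [Cρ]
  have hsum3 : ∀ f : ℤ → ℝ, ∑ k ∈ Finset.Icc (-1 : ℤ) 1, f k = f (-1) + f 0 + f 1 := by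
    intro f
    have h : Finset.Icc (-1 : ℤ) 1 = {-1, 0, 1} := by decide
    rw [h, Finset.sum_insert (by decide), Finset.sum_insert (by decide),
      Finset.sum_singleton]
    ring
  have keyβ : ∀ X : ℝ, X / beta α w ≤ 0 ↔ X ≤ 0 := by
    intro X
    rw [div_nonpos_iff]
    constructor
    · rintro (⟨h1, h2⟩ | ⟨h1, h2⟩)
      · linarith
      · exact h1
    · intro h
      exact Or.inr ⟨h, hβ.le⟩
  refine ⟨⟨hβ, hR, hS1, hS2, hS3⟩, ?_, ?_, ?_⟩
  · -- summation condition
    intro ρ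
    rw [hsum3, hsum3, hsum3, hsum3, hCm1m1, hCm10, hCm11, hC0m1, hC00, hC01,
      hC1m1, hC10, hC11]
    field_simp
    simp only [beta, r1, r2, r3, r4, r5, s1, s2, s3, s4, s5, s6, s7, s8,
      t1, t2, t3, t4, t5, t6, t7, t8, t9, t10]
    ring
  · -- sign condition characterization
    intro ρ
    constructor
    · rintro ⟨-, hall⟩
      have m1 : (-1 : ℤ) ∈ Finset.Icc (-1 : ℤ) 1 := by decide
      have m0 : (0 : ℤ) ∈ Finset.Icc (-1 : ℤ) 1 := by decide
      have mp1 : (1 : ℤ) ∈ Finset.Icc (-1 : ℤ) 1 := by decide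
      have e1 := hall (-1) m1 1 mp1 (by decide)
      have e2 := hall 0 m0 1 mp1 (by decide)
      have e3 := hall (-1) m1 0 m0 (by decide)
      have e4 := hall 1 mp1 0 m0 (by decide)
      have e5 := hall 1 mp1 1 mp1 (by decide)
      rw [hCm11, keyβ] at e1
      rw [hC01, keyβ] at e2
      rw [hCm10, keyβ] at e3
      rw [hC10, keyβ] at e4
      rw [hC11] at e5
      constructor
      · refine max_le (max_le ?_ ?_) ?_
        · rw [div_le_iff_of_neg hS1]; linarith [e2]
        · rw [div_le_iff_of_neg hS2]; linarith [e3]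
        · rw [div_le_iff_of_neg hS3]; linarith [e4]
      · refine le_min e5 ?_
        rw [le_div_iff₀ hR]; linarith [e1]
    · rintro ⟨hlo, hhi⟩
      have l1 : -(t3 w + t4 w * α^2 + t5 w * α) / (s1 w + s2 w * α^2 + s3 w * α) ≤ ρ :=
        le_trans (le_trans (le_max_left _ _) (le_max_left _ _)) hlo
      have l2 : -(t6 w * α^2 + t7 w * α) / (s4 w * α^2 + s5 w * α) ≤ ρ :=
        le_trans (le_trans (le_max_right _ _) (le_max_left _ _)) hlo
      have l3 : -(t8 w + t9 w * α^2 + t10 w * α) / (s6 w + s7 w * α^2 + s8 w * α) ≤ ρ :=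
        le_trans (le_max_right _ _) hlo
      have u0 : ρ ≤ 0 := le_trans hhi (min_le_left _ _)
      have u1 : ρ ≤ -(t1 w * α^2 + t2 w * α) / (r4 w * α^2 + r5 w * α) :=
        le_trans hhi (min_le_right _ _)
      rw [div_le_iff_of_neg hS1] at l1
      rw [div_le_iff_of_neg hS2] at l2
      rw [div_le_iff_of_neg hS3] at l3
      rw [le_div_iff₀ hR] at u1
      have hA : ((r4 w * α^2 + r5 w * α) * ρ + t1 w * α^2 + t2 w * α) / beta α w ≤ 0 := by
        rw [keyβ]; linarith [l1, l2, l3, u0, u1]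
      have hB : ((s1 w + s2 w * α^2 + s3 w * α) * ρ + t3 w + t4 w * α^2 + t5 w * α)
          / beta α w ≤ 0 := by
        rw [keyβ]; linarith [l1, l2, l3, u0, u1]
      have hC : ((s4 w * α^2 + s5 w * α) * ρ + t6 w * α^2 + t7 w * α) / beta α w ≤ 0 := by
        rw [keyβ]; linarith [l1, l2, l3, u0, u1]
      have hD : ((s6 w + s7 w * α^2 + s8 w * α) * ρ + t8 w + t9 w * α^2 + t10 w * α)
          / beta α w ≤ 0 := by
        rw [keyβ]; linarith [l1, l2, l3, u0, u1]
      refine ⟨by rw [hC00]; norm_num, ?_⟩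
      intro k hk l hl hne
      rw [Finset.mem_Icc] at hk hl
      obtain ⟨hk1, hk2⟩ := hk
      obtain ⟨hl1, hl2⟩ := hl
      interval_cases k <;> interval_cases l
      · rw [hCm1m1]; exact hA
      · rw [hCm10]; exact hC
      · rw [hCm11]; exact hA
      · rw [hC0m1]; exact hB
      · exact absurd rfl hne
      · rw [hC01]; exact hB
      · rw [hC1m1]; exact u0
      · rw [hC10]; exact hD
      · rw [hC11]; exact u0
  · -- nonemptiness
    have hmS1 : (0:ℝ) < -(s1 w + s2 w * α^2 + s3 w * α) := by linarith
    have hmS2 : (0:ℝ) < -(s4 w * α^2 + s5 w * α) := by linarith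
    have hmS3 : (0:ℝ) < -(s6 w + s7 w * α^2 + s8 w * α) := by linarith
    have e1 : -(t3 w + t4 w * α^2 + t5 w * α) / (s1 w + s2 w * α^2 + s3 w * α)
        = (t3 w + t4 w * α^2 + t5 w * α) / (-(s1 w + s2 w * α^2 + s3 w * α)) := by
      rw [div_neg, neg_div]
    have e2 : -(t6 w * α^2 + t7 w * α) / (s4 w * α^2 + s5 w * α)
        = (t6 w * α^2 + t7 w * α) / (-(s4 w * α^2 + s5 w * α)) := by
      rw [div_neg, neg_div]
    have e3 : -(t8 w + t9 w * α^2 + t10 w * α) / (s6 w + s7 w * α^2 + s8 w * α)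
        = (t8 w + t9 w * α^2 + t10 w * α) / (-(s6 w + s7 w * α^2 + s8 w * α)) := by
      rw [div_neg, neg_div]
    refine lt_min (max_lt (max_lt ?_ ?_) ?_) (max_lt (max_lt ?_ ?_) ?_)
    · exact div_neg_of_pos_of_neg (by linarith) hS1
    · exact div_neg_of_pos_of_neg (by linarith) hS2
    · exact div_neg_of_pos_of_neg (by linarith) hS3
    · rw [e1, div_lt_div_iff₀ hmS1 hR]
      linarith [hD1]
    · rw [e2, div_lt_div_iff₀ hmS2 hR]
      linarith [hD2]
    · rw [e3, div_lt_div_iff₀ hmS3 hR]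
      linarith [hD3]
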